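/- Let 3 ≤ k ≤ n−2. For integers 2 ≤ κ ≤ ν−2, define the rank-graded root polytope R̂_{κ,ν} ⊂ ℝ^{(κ−1)×(ν−κ+1)} as the convex hull of: the origin; the vectors v̂_J = Σ_{λ=1}^{κ−1} ( e_{λ, j_λ − (λ−1)} − e_{λ, j_{λ+1} − (λ−1) − 1} ) for each nonfrozen κ-element subset J = {j₁ < ⋯ < j_κ} of {1,…,ν} (a κ-element subset is frozen if it is a cyclic interval {i, i+1, …, i+κ−1} modulo ν for some i, and nonfrozen otherwise); and the vectors e_{i,1} − e_{i,ν−κ+1} for i = 1,…,κ−1, where e_{i,j} denotes the standard basis of ℝ^{(κ−1)×(ν−κ+1)}. For each i ∈ {1,…,k−1}, let ι_i : ℝ^{(k−2)×(n−k+1)} → ℝ^{(k−1)×(n−k+1)} be the injective linear map determined by ι_i(e_{λ,j}) = e_{λ,j} for λ < i and ι_i(e_{λ,j}) = e_{λ+1,j} for λ ≥ i. Then R̂_{k,n} ∩ { α ∈ ℝ^{(k−1)×(n−k+1)} : α_{i,j} = 0 for all j = 1,…,n−k+1 } = ι_i(R̂_{k−1,n−1}). -/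
import Mathlib


namespace Stmt13

/-- The matrix unit e_{i,j} in ℝ^{a×b} (functions Fin a → Fin b → ℝ). -/
def E {a b : ℕ} (i : Fin a) (j : Fin b) : Fin a → Fin b → ℝ :=
  fun p q => if p = i ∧ q = j then 1 else 0

/-- The cyclic interval {i, i+1, …, i+κ−1} (mod ν) inside Fin ν. -/
def cyclicInterval (ν κ : ℕ) (i : Fin ν) : Finset (Fin ν) :=
  Finset.image (fun t : Fin κ => (⟨(i.val + t.val) % ν, Nat.mod_lt _ i.pos⟩ : Fin ν))
    Finset.univ

/-- A κ-element subset of {1,…,ν} is frozen if it is a cyclic interval. -/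
def frozen (ν κ : ℕ) (J : Finset (Fin ν)) : Prop :=
  ∃ i : Fin ν, J = cyclicInterval ν κ i

/-- The 1-based value of the t-th smallest element of J. -/
def jj {ν κ : ℕ} (J : Finset (Fin ν)) (hJ : J.card = κ) (t : Fin κ) : ℕ :=
  ((J.orderIsoOfFin hJ t : Fin ν) : ℕ) + 1

/-- The vertex v̂_J = Σ_{λ=1}^{κ−1} (e_{λ, j_λ−(λ−1)} − e_{λ, j_{λ+1}−(λ−1)−1}) of the
rank-graded root polytope, written in 0-based coordinates. -/
noncomputable def vhat (κ ν : ℕ) (J : Finset (Fin ν)) (hJ : J.card = κ) :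
    Fin (κ - 1) → Fin (ν - κ + 1) → ℝ :=
  ∑ l : Fin (κ - 1),
    (E l ⟨(jj J hJ ⟨l.val, by have := l.isLt; omega⟩ - 1 - l.val) % (ν - κ + 1),
        Nat.mod_lt _ (Nat.succ_pos _)⟩
      - E l ⟨(jj J hJ ⟨l.val + 1, by have := l.isLt; omega⟩ - 1 - (l.val + 1)) % (ν - κ + 1),
        Nat.mod_lt _ (Nat.succ_pos _)⟩)

/-- The rank-graded root polytope R̂_{κ,ν} ⊂ ℝ^{(κ−1)×(ν−κ+1)}: the convex hull of the
origin, the vectors v̂_J for J nonfrozen, and the vectors e_{i,1} − e_{i,ν−κ+1}. -/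
noncomputable def Rhat (κ ν : ℕ) : Set (Fin (κ - 1) → Fin (ν - κ + 1) → ℝ) :=
  convexHull ℝ ({0}
    ∪ {x | ∃ (J : Finset (Fin ν)) (hJ : J.card = κ), ¬ frozen ν κ J ∧ x = vhat κ ν J hJ}
    ∪ {x | ∃ i : Fin (κ - 1),
        x = E i ⟨0, Nat.succ_pos _⟩ - E i ⟨ν - κ, Nat.lt_succ_self _⟩})

/-- The injective linear embedding ι_i : ℝ^{(k−2)×(n−k+1)} → ℝ^{(k−1)×(n−k+1)} determined
by ι_i(e_{λ,j}) = e_{λ,j} for λ < i and ι_i(e_{λ,j}) = e_{λ+1,j} for λ ≥ i,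
where i ∈ {1,…,k−1} is encoded as an element of Fin (k−1). -/
noncomputable def iota (k n : ℕ) (i : Fin (k - 1))
    (α : Fin (k - 1 - 1) → Fin (n - 1 - (k - 1) + 1) → ℝ) :
    Fin (k - 1) → Fin (n - k + 1) → ℝ :=
  fun r j =>
    if h : r.val < i.val then
      α ⟨r.val, by have := i.isLt; omega⟩
        ⟨j.val % (n - 1 - (k - 1) + 1), Nat.mod_lt _ (Nat.succ_pos _)⟩
    else if h2 : r.val = i.val then 0
    else
      α ⟨r.val - 1, by have hr := r.isLt; have hi := i.isLt; omega⟩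
        ⟨j.val % (n - 1 - (k - 1) + 1), Nat.mod_lt _ (Nat.succ_pos _)⟩

/-- step lemma for strictly monotone maps between Fin types -/

lemma mono_step {κ ν : ℕ} {f : Fin κ → Fin ν} (hf : StrictMono f) :
    ∀ (d : ℕ) (s t : Fin κ), s.val + d = t.val → (f s).val + d ≤ (f t).val := by
  intro d
  induction d with
  | zero => intro s t h; have : s = t := Fin.ext (by omega); subst this; omega
  | succ d ih =>
    intro s t h
    have ht' : s.val + d < κ := by have := t.isLt; omega
    have h1 := ih s ⟨s.val + d, ht'⟩ rfl
    have h2 : f ⟨s.val + d, ht'⟩ < f t := hf (show _ < _ from Fin.lt_def.mpr (by show s.val + d < t.val; omega))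
    rw [Fin.lt_def] at h2
    omega

/-- bounds for orderEmbOfFin-like maps -/

lemma emb_bounds {κ ν : ℕ} {f : Fin κ → Fin ν} (hf : StrictMono f) (t : Fin κ) :
    t.val ≤ (f t).val ∧ (f t).val + (κ - 1 - t.val) ≤ ν - 1 := by
  have h0 : (0:ℕ) < κ := by have := t.isLt; omega
  constructor
  · have := mono_step hf t.val ⟨0, h0⟩ t (show 0 + t.val = t.val by omega); omega
  · have hlast : κ - 1 < κ := by omega
    have h1 := mono_step hf (κ - 1 - t.val) t ⟨κ - 1, hlast⟩
      (show t.val + (κ - 1 - t.val) = κ - 1 by have := t.isLt; omega)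
    have h2 : (f ⟨κ - 1, hlast⟩).val < ν := (f ⟨κ - 1, hlast⟩).isLt
    omega

lemma imageCard {κ ν : ℕ} (f : Fin κ → Fin ν) (hf : StrictMono f) :
    (Finset.image f Finset.univ).card = κ := by
  rw [Finset.card_image_of_injective _ hf.injective, Finset.card_univ, Fintype.card_fin]

lemma imageEmb {κ ν : ℕ} (f : Fin κ → Fin ν) (hf : StrictMono f)
    (h : (Finset.image f Finset.univ).card = κ) (t : Fin κ) :
    (Finset.image f Finset.univ).orderEmbOfFin h t = f t := by
  rw [← Finset.orderEmbOfFin_unique h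
    (fun x => Finset.mem_image_of_mem f (Finset.mem_univ x)) hf]

lemma mem_iff_emb {ν κ : ℕ} (J : Finset (Fin ν)) (hJ : J.card = κ) (x : Fin ν) :
    x ∈ J ↔ ∃ t : Fin κ, J.orderEmbOfFin hJ t = x := by
  constructor
  · intro hx
    have : x ∈ Set.range (J.orderEmbOfFin hJ) := by
      rw [Finset.range_orderEmbOfFin]; exact hx
    exact this
  · rintro ⟨t, rfl⟩; exact Finset.orderEmbOfFin_mem J hJ t

lemma jj_eq {ν κ : ℕ} (J : Finset (Fin ν)) (hJ : J.card = κ) (t : Fin κ) :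
    jj J hJ t = (J.orderEmbOfFin hJ t).val + 1 := by
  simp [jj, Finset.coe_orderIsoOfFin_apply]

lemma vhat_apply (κ ν : ℕ) (J : Finset (Fin ν)) (hJ : J.card = κ)
    (r : Fin (κ - 1)) (c : Fin (ν - κ + 1)) (t₁ t₂ : Fin κ)
    (h₁ : t₁.val = r.val) (h₂ : t₂.val = r.val + 1) :
    vhat κ ν J hJ r c =
      (if c.val + r.val = (J.orderEmbOfFin hJ t₁).val then 1 else 0)
      - (if c.val + r.val + 1 = (J.orderEmbOfFin hJ t₂).val then 1 else 0) := by
  have hκν : κ ≤ ν := by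
    have := Finset.card_le_univ J
    simp [Finset.card_univ] at this; omega
  have hmono : StrictMono (J.orderEmbOfFin hJ) := (J.orderEmbOfFin hJ).strictMono
  have hb1 := emb_bounds hmono t₁
  have hb2 := emb_bounds hmono t₂
  have hrlt := r.isLt
  unfold vhat
  rw [Finset.sum_apply, Finset.sum_apply]
  rw [Finset.sum_eq_single r]
  · have e1 : (⟨r.val, by omega⟩ : Fin κ) = t₁ := Fin.ext (by simp [h₁])
    have e2 : (⟨r.val + 1, by omega⟩ : Fin κ) = t₂ := Fin.ext (by simp [h₂])
    simp only [Pi.sub_apply, E, and_true, eq_self_iff_true, true_and, Fin.ext_iff]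
    rw [e1, e2, jj_eq, jj_eq]
    have hm1 : ((J.orderEmbOfFin hJ t₁).val + 1 - 1 - r.val) % (ν - κ + 1)
        = (J.orderEmbOfFin hJ t₁).val - r.val := Nat.mod_eq_of_lt (by omega)
    have hm2 : ((J.orderEmbOfFin hJ t₂).val + 1 - 1 - (r.val + 1)) % (ν - κ + 1)
        = (J.orderEmbOfFin hJ t₂).val - (r.val + 1) := Nat.mod_eq_of_lt (by omega)
    rw [hm1, hm2]
    congr 1
    · exact if_congr (by omega) rfl rfl
    · exact if_congr (by omega) rfl rfl
  · intro b _ hb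
    simp [E, Pi.sub_apply, Ne.symm hb]
  · intro h; exact absurd (Finset.mem_univ r) h


section
variable (k n : ℕ)

def lift0 {n : ℕ} (v : Fin (n - 1)) : Fin n := ⟨v.val, by have := v.isLt; omega⟩

def lift1 {n : ℕ} (v : Fin (n - 1)) : Fin n := ⟨v.val + 1, by have := v.isLt; omega⟩

def insF (k n : ℕ) (i : Fin (k - 1)) (g : Fin (k - 1) → Fin (n - 1)) (t : Fin k) : Fin n :=
  if h : t.val ≤ i.val then lift0 (g ⟨t.val, by have := i.isLt; omega⟩)
  else lift1 (g ⟨t.val - 1, by have := t.isLt; omega⟩)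

lemma insF_val_le {k n : ℕ} (i : Fin (k - 1)) (g : Fin (k - 1) → Fin (n - 1))
    (t : Fin k) (s : Fin (k - 1)) (h : t.val ≤ i.val) (hs : s.val = t.val) :
    (insF k n i g t).val = (g s).val := by
  obtain ⟨sv, hsvlt⟩ := s
  simp only at hs
  subst hs
  unfold insF
  rw [dif_pos h]
  rfl

lemma insF_val_gt {k n : ℕ} (i : Fin (k - 1)) (g : Fin (k - 1) → Fin (n - 1))
    (t : Fin k) (s : Fin (k - 1)) (h : ¬ t.val ≤ i.val) (hs : s.val = t.val - 1) :
    (insF k n i g t).val = (g s).val + 1 := by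
  obtain ⟨sv, hsvlt⟩ := s
  simp only at hs
  subst hs
  unfold insF
  rw [dif_neg h]
  rfl

lemma insF_mono {k n : ℕ} (i : Fin (k - 1)) {g : Fin (k - 1) → Fin (n - 1)}
    (hg : StrictMono g) : StrictMono (insF k n i g) := by
  have hlt : ∀ s1 s2 : Fin (k - 1), s1.val < s2.val → (g s1).val < (g s2).val := by
    intro s1 s2 h; exact Fin.lt_def.mp (hg (Fin.lt_def.mpr h))
  have hle : ∀ s1 s2 : Fin (k - 1), s1.val ≤ s2.val → (g s1).val ≤ (g s2).val := by
    intro s1 s2 h; exact Fin.le_def.mp (hg.monotone (Fin.le_def.mpr h))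
  intro a b hab
  rw [Fin.lt_def] at hab ⊢
  have hia := i.isLt
  have hb := b.isLt
  by_cases ha' : a.val ≤ i.val
  · by_cases hb' : b.val ≤ i.val
    · rw [insF_val_le i g a ⟨a.val, by omega⟩ ha' rfl,
        insF_val_le i g b ⟨b.val, by omega⟩ hb' rfl]
      exact hlt _ _ hab
    · rw [insF_val_le i g a ⟨a.val, by omega⟩ ha' rfl,
        insF_val_gt i g b ⟨b.val - 1, by omega⟩ hb' rfl]
      have := hle ⟨a.val, by omega⟩ ⟨b.val - 1, by omega⟩ (by show a.val ≤ b.val - 1; omega)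
      omega
  · have hb' : ¬ b.val ≤ i.val := by omega
    rw [insF_val_gt i g a ⟨a.val - 1, by omega⟩ ha' rfl,
      insF_val_gt i g b ⟨b.val - 1, by omega⟩ hb' rfl]
    have := hlt ⟨a.val - 1, by omega⟩ ⟨b.val - 1, by omega⟩ (by show a.val - 1 < b.val - 1; omega)
    omega

/-- deletion map: remove the (i+1)-st entry and shift down -/

def delF (k n : ℕ) (hk : 3 ≤ k) (hkn : k + 2 ≤ n) (i : Fin (k - 1))
    (f : Fin k → Fin n) (s : Fin (k - 1)) : Fin (n - 1) :=
  if h : s.val ≤ i.val then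
    ⟨(f ⟨s.val, by have := s.isLt; omega⟩).val % (n - 1), Nat.mod_lt _ (by omega)⟩
  else
    ⟨((f ⟨s.val + 1, by have := s.isLt; omega⟩).val - 1) % (n - 1), Nat.mod_lt _ (by omega)⟩

lemma delF_val_le {k n : ℕ} (hk : 3 ≤ k) (hkn : k + 2 ≤ n) (i : Fin (k - 1))
    {f : Fin k → Fin n} (hf : StrictMono f) (s : Fin (k - 1)) (t : Fin k)
    (h : s.val ≤ i.val) (hs : t.val = s.val) :
    (delF k n hk hkn i f s).val = (f t).val := by
  have hb := emb_bounds hf t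
  have hsl := s.isLt
  have hmod : (f t).val % (n - 1) = (f t).val := Nat.mod_eq_of_lt (by omega)
  obtain ⟨tv, htv⟩ := t
  simp only at hs hmod hb ⊢
  subst hs
  unfold delF
  rw [dif_pos h]
  exact hmod

lemma delF_val_gt {k n : ℕ} (hk : 3 ≤ k) (hkn : k + 2 ≤ n) (i : Fin (k - 1))
    {f : Fin k → Fin n} (hf : StrictMono f) (s : Fin (k - 1)) (t : Fin k)
    (h : ¬ s.val ≤ i.val) (hs : t.val = s.val + 1) :
    (delF k n hk hkn i f s).val = (f t).val - 1 := by
  have hb := emb_bounds hf t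
  have hsl := s.isLt
  have hmod : ((f t).val - 1) % (n - 1) = (f t).val - 1 := Nat.mod_eq_of_lt (by omega)
  obtain ⟨tv, htv⟩ := t
  simp only at hs hmod hb ⊢
  subst hs
  unfold delF
  rw [dif_neg h]
  exact hmod

lemma delF_mono {k n : ℕ} (hk : 3 ≤ k) (hkn : k + 2 ≤ n) (i : Fin (k - 1))
    {f : Fin k → Fin n} (hf : StrictMono f) : StrictMono (delF k n hk hkn i f) := by
  intro a b hab
  rw [Fin.lt_def] at hab ⊢
  have hia := i.isLt
  have hbl := b.isLt
  by_cases ha' : a.val ≤ i.val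
  · obtain ⟨ta, hta⟩ : ∃ t : Fin k, t.val = a.val := ⟨⟨a.val, by omega⟩, rfl⟩
    by_cases hb' : b.val ≤ i.val
    · obtain ⟨tb, htb⟩ : ∃ t : Fin k, t.val = b.val := ⟨⟨b.val, by omega⟩, rfl⟩
      rw [delF_val_le hk hkn i hf a ta ha' hta, delF_val_le hk hkn i hf b tb hb' htb]
      have := mono_step hf (b.val - a.val) ta tb (by omega)
      omega
    · obtain ⟨tb, htb⟩ : ∃ t : Fin k, t.val = b.val + 1 := ⟨⟨b.val + 1, by omega⟩, rfl⟩
      rw [delF_val_le hk hkn i hf a ta ha' hta, delF_val_gt hk hkn i hf b tb hb' htb]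
      have := mono_step hf (b.val + 1 - a.val) ta tb (by omega)
      omega
  · have hb' : ¬ b.val ≤ i.val := by omega
    obtain ⟨ta, hta⟩ : ∃ t : Fin k, t.val = a.val + 1 := ⟨⟨a.val + 1, by omega⟩, rfl⟩
    obtain ⟨tb, htb⟩ : ∃ t : Fin k, t.val = b.val + 1 := ⟨⟨b.val + 1, by omega⟩, rfl⟩
    rw [delF_val_gt hk hkn i hf a ta ha' hta, delF_val_gt hk hkn i hf b tb hb' htb]
    have h1 := mono_step hf (b.val - a.val) ta tb (by omega)
    have h2 := emb_bounds hf ta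
    omega

lemma insF_delF {k n : ℕ} (hk : 3 ≤ k) (hkn : k + 2 ≤ n) (i : Fin (k - 1))
    {f : Fin k → Fin n} (hf : StrictMono f)
    {ti ti1 : Fin k} (hti : ti.val = i.val) (hti1 : ti1.val = i.val + 1)
    (hcons : (f ti1).val = (f ti).val + 1) :
    insF k n i (delF k n hk hkn i f) = f := by
  funext t
  apply Fin.ext
  have hia := i.isLt
  have htl := t.isLt
  by_cases h : t.val ≤ i.val
  · obtain ⟨s, hs⟩ : ∃ s : Fin (k - 1), s.val = t.val := ⟨⟨t.val, by omega⟩, rfl⟩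
    rw [insF_val_le i _ t s h hs,
      delF_val_le hk hkn i hf s t (by omega) hs.symm]
  · obtain ⟨s, hs⟩ : ∃ s : Fin (k - 1), s.val = t.val - 1 := ⟨⟨t.val - 1, by omega⟩, rfl⟩
    rw [insF_val_gt i _ t s h hs]
    by_cases h2 : t.val = i.val + 1
    · rw [delF_val_le hk hkn i hf s ti (by omega) (by omega)]
      have : t = ti1 := Fin.ext (by omega)
      rw [this, hcons]
    · rw [delF_val_gt hk hkn i hf s t (by omega) (by omega)]
      have := mono_step hf (t.val - i.val) ti t (by omega)
      have := emb_bounds hf ti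
      omega
end

def charFrozen (ν κ : ℕ) (f : Fin κ → Fin ν) : Prop :=
  (∃ c, c + κ ≤ ν ∧ ∀ t : Fin κ, (f t).val = c + t.val) ∨
  (∃ m, 1 ≤ m ∧ m < κ ∧ ∀ t : Fin κ, (f t).val = if t.val < m then t.val else ν - κ + t.val)

lemma card_le {ν κ : ℕ} {J : Finset (Fin ν)} (hJ : J.card = κ) : κ ≤ ν := by
  have := Finset.card_le_univ J
  simp only [Finset.card_univ, Fintype.card_fin] at this
  omega

lemma frozen_char {ν κ : ℕ} {J : Finset (Fin ν)} (hJ : J.card = κ) (hκ : 1 ≤ κ)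
    (hfr : frozen ν κ J) : charFrozen ν κ (fun t => J.orderEmbOfFin hJ t) := by
  obtain ⟨i0, hi0⟩ := hfr
  have hκν : κ ≤ ν := card_le hJ
  have hi0l := i0.isLt
  by_cases hw : i0.val + κ ≤ ν
  · left
    refine ⟨i0.val, hw, ?_⟩
    set h : Fin κ → Fin ν := fun t => ⟨i0.val + t.val, by have := t.isLt; omega⟩ with hh
    have hmem : ∀ t, h t ∈ J := by
      intro t
      rw [hi0]
      unfold cyclicInterval
      rw [Finset.mem_image]
      refine ⟨t, Finset.mem_univ t, Fin.ext ?_⟩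
      show (i0.val + t.val) % ν = (h t).val
      rw [Nat.mod_eq_of_lt (by have := t.isLt; omega)]
    have hmono : StrictMono h := by
      intro a b hab
      rw [Fin.lt_def] at hab ⊢
      show i0.val + a.val < i0.val + b.val
      omega
    have huniq := Finset.orderEmbOfFin_unique hJ hmem hmono
    intro t
    rw [← huniq]
  · right
    refine ⟨i0.val + κ - ν, by omega, by omega, ?_⟩
    set h : Fin κ → Fin ν := fun t =>
      ⟨if t.val < i0.val + κ - ν then t.val else ν - κ + t.val,
        by have := t.isLt; split <;> omega⟩ with hh
    have hmem : ∀ t, h t ∈ J := by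
      intro t
      have htl := t.isLt
      rw [hi0]
      unfold cyclicInterval
      rw [Finset.mem_image]
      by_cases htm : t.val < i0.val + κ - ν
      · refine ⟨⟨t.val + (ν - i0.val), by omega⟩, Finset.mem_univ _, Fin.ext ?_⟩
        show (i0.val + (t.val + (ν - i0.val))) % ν = (h t).val
        have e1 : i0.val + (t.val + (ν - i0.val)) = ν + t.val := by omega
        rw [e1, Nat.add_mod_left, Nat.mod_eq_of_lt (by omega)]
        show t.val = if t.val < i0.val + κ - ν then t.val else ν - κ + t.val
        rw [if_pos htm]
      · refine ⟨⟨t.val - (i0.val + κ - ν), by omega⟩, Finset.mem_univ _, Fin.ext ?_⟩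
        show (i0.val + (t.val - (i0.val + κ - ν))) % ν = (h t).val
        have e1 : i0.val + (t.val - (i0.val + κ - ν)) = ν - κ + t.val := by omega
        rw [e1, Nat.mod_eq_of_lt (by omega)]
        show ν - κ + t.val = if t.val < i0.val + κ - ν then t.val else ν - κ + t.val
        rw [if_neg htm]
    have hmono : StrictMono h := by
      intro a b hab
      rw [Fin.lt_def] at hab ⊢
      show (if a.val < i0.val + κ - ν then a.val else ν - κ + a.val)
        < (if b.val < i0.val + κ - ν then b.val else ν - κ + b.val)
      split <;> split <;> omega
    have huniq := Finset.orderEmbOfFin_unique hJ hmem hmono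
    intro t
    rw [← huniq]

lemma char_frozen {ν κ : ℕ} {J : Finset (Fin ν)} (hJ : J.card = κ) (hκ : 1 ≤ κ)
    (hc : charFrozen ν κ (fun t => J.orderEmbOfFin hJ t)) : frozen ν κ J := by
  have hκν : κ ≤ ν := card_le hJ
  rcases hc with ⟨c, hc1, hv⟩ | ⟨m, hm1, hm2, hv⟩
  · refine ⟨⟨c, by omega⟩, ?_⟩
    ext x
    rw [mem_iff_emb J hJ]
    unfold cyclicInterval
    rw [Finset.mem_image]
    constructor
    · rintro ⟨t, rfl⟩
      refine ⟨t, Finset.mem_univ t, Fin.ext ?_⟩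
      show (c + t.val) % ν = ((J.orderEmbOfFin hJ) t).val
      rw [Nat.mod_eq_of_lt (by have := t.isLt; omega)]
      exact (hv t).symm
    · rintro ⟨t, -, rfl⟩
      refine ⟨t, Fin.ext ?_⟩
      show ((J.orderEmbOfFin hJ) t).val = (c + t.val) % ν
      rw [Nat.mod_eq_of_lt (by have := t.isLt; omega)]
      exact hv t
  · refine ⟨⟨ν - κ + m, by omega⟩, ?_⟩
    ext x
    rw [mem_iff_emb J hJ]
    unfold cyclicInterval
    rw [Finset.mem_image]
    constructor
    · rintro ⟨t, rfl⟩
      have htl := t.isLt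
      by_cases htm : t.val < m
      · refine ⟨⟨κ - m + t.val, by omega⟩, Finset.mem_univ _, Fin.ext ?_⟩
        show (ν - κ + m + (κ - m + t.val)) % ν = ((J.orderEmbOfFin hJ) t).val
        have e1 : ν - κ + m + (κ - m + t.val) = ν + t.val := by omega
        rw [e1, Nat.add_mod_left, Nat.mod_eq_of_lt (by omega), hv t, if_pos htm]
      · refine ⟨⟨t.val - m, by omega⟩, Finset.mem_univ _, Fin.ext ?_⟩
        show (ν - κ + m + (t.val - m)) % ν = ((J.orderEmbOfFin hJ) t).val
        have e1 : ν - κ + m + (t.val - m) = ν - κ + t.val := by omega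
        rw [e1, Nat.mod_eq_of_lt (by omega), hv t, if_neg htm]
    · rintro ⟨t, -, rfl⟩
      have htl := t.isLt
      by_cases htm : t.val < κ - m
      · refine ⟨⟨m + t.val, by omega⟩, Fin.ext ?_⟩
        rw [hv ⟨m + t.val, by omega⟩]
        show (if m + t.val < m then m + t.val else ν - κ + (m + t.val))
          = (ν - κ + m + t.val) % ν
        rw [if_neg (by omega), Nat.mod_eq_of_lt (by omega)]
        omega
      · refine ⟨⟨m + t.val - κ, by omega⟩, Fin.ext ?_⟩
        rw [hv ⟨m + t.val - κ, by omega⟩]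
        show (if m + t.val - κ < m then m + t.val - κ else ν - κ + (m + t.val - κ))
          = (ν - κ + m + t.val) % ν
        rw [if_pos (by omega), Nat.mod_eq_sub_mod (by omega)]
        have e1 : ν - κ + m + t.val - ν = m + t.val - κ := by omega
        rw [e1, Nat.mod_eq_of_lt (by omega)]

lemma char_transfer {k n : ℕ} (hk : 3 ≤ k) (hkn : k + 2 ≤ n) (i : Fin (k - 1))
    (g : Fin (k - 1) → Fin (n - 1)) :
    charFrozen n k (insF k n i g) ↔ charFrozen (n - 1) (k - 1) g := by
  have hia := i.isLt
  constructor
  · rintro (⟨c, hc1, hv⟩ | ⟨m, hm1, hm2, hv⟩)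
    · left
      refine ⟨c, by omega, fun s => ?_⟩
      have hsl := s.isLt
      by_cases hs : s.val ≤ i.val
      · obtain ⟨t, ht⟩ : ∃ t : Fin k, t.val = s.val := ⟨⟨s.val, by omega⟩, rfl⟩
        have e := insF_val_le i g t s (by omega) (by omega)
        rw [hv t] at e
        omega
      · obtain ⟨t, ht⟩ : ∃ t : Fin k, t.val = s.val + 1 := ⟨⟨s.val + 1, by omega⟩, rfl⟩
        have e := insF_val_gt i g t s (by omega) (by omega)
        rw [hv t] at e
        omega
    · obtain ⟨t0, ht0⟩ : ∃ t : Fin k, t.val = i.val := ⟨⟨i.val, by omega⟩, rfl⟩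
      obtain ⟨t1, ht1⟩ : ∃ t : Fin k, t.val = i.val + 1 := ⟨⟨i.val + 1, by omega⟩, rfl⟩
      have e0 := insF_val_le i g t0 i (by omega) (by omega)
      have e1 := insF_val_gt i g t1 i (by omega) (by omega)
      rw [hv t0] at e0
      rw [hv t1] at e1
      have hdisj : m ≤ i.val ∨ i.val + 2 ≤ m := by
        by_cases hmi : m ≤ i.val
        · exact Or.inl hmi
        · right; split at e0 <;> split at e1 <;> omega
      right
      refine ⟨if m ≤ i.val then m else m - 1, by split_ifs <;> omega,
        by split_ifs <;> omega, fun s => ?_⟩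
      have hsl := s.isLt
      by_cases hs : s.val ≤ i.val
      · obtain ⟨t, ht⟩ : ∃ t : Fin k, t.val = s.val := ⟨⟨s.val, by omega⟩, rfl⟩
        have e := insF_val_le i g t s (by omega) (by omega)
        rw [hv t] at e
        split at e <;> split_ifs <;> omega
      · obtain ⟨t, ht⟩ : ∃ t : Fin k, t.val = s.val + 1 := ⟨⟨s.val + 1, by omega⟩, rfl⟩
        have e := insF_val_gt i g t s (by omega) (by omega)
        rw [hv t] at e
        split at e <;> split_ifs <;> omega
  · rintro (⟨c, hc1, hv⟩ | ⟨m, hm1, hm2, hv⟩)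
    · left
      refine ⟨c, by omega, fun t => ?_⟩
      have htl := t.isLt
      by_cases hs : t.val ≤ i.val
      · obtain ⟨s, hs'⟩ : ∃ s : Fin (k - 1), s.val = t.val := ⟨⟨t.val, by omega⟩, rfl⟩
        have e := insF_val_le i g t s hs (by omega)
        rw [hv s] at e
        omega
      · obtain ⟨s, hs'⟩ : ∃ s : Fin (k - 1), s.val = t.val - 1 := ⟨⟨t.val - 1, by omega⟩, rfl⟩
        have e := insF_val_gt i g t s hs (by omega)
        rw [hv s] at e
        omega
    · right
      refine ⟨if m ≤ i.val then m else m + 1, by split_ifs <;> omega,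
        by split_ifs <;> omega, fun t => ?_⟩
      have htl := t.isLt
      by_cases hs : t.val ≤ i.val
      · obtain ⟨s, hs'⟩ : ∃ s : Fin (k - 1), s.val = t.val := ⟨⟨t.val, by omega⟩, rfl⟩
        have e := insF_val_le i g t s hs (by omega)
        rw [hv s] at e
        split at e <;> split_ifs <;> omega
      · obtain ⟨s, hs'⟩ : ∃ s : Fin (k - 1), s.val = t.val - 1 := ⟨⟨t.val - 1, by omega⟩, rfl⟩
        have e := insF_val_gt i g t s hs (by omega)
        rw [hv s] at e
        split at e <;> split_ifs <;> omega

lemma fin_mk_mod {M x : ℕ} (hx : x < M) {p : x % M < M} :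
    (⟨x % M, p⟩ : Fin M) = ⟨x, hx⟩ := Fin.ext (Nat.mod_eq_of_lt hx)

lemma iota_val_lt {k n : ℕ} (i : Fin (k - 1)) (α) (r : Fin (k - 1)) (j : Fin (n - k + 1))
    (r' : Fin (k - 1 - 1)) (j' : Fin (n - 1 - (k - 1) + 1))
    (h : r.val < i.val) (hr : r'.val = r.val) (hj : j'.val = j.val) :
    iota k n i α r j = α r' j' := by
  obtain ⟨rv, hrv⟩ := r'
  obtain ⟨jv, hjv⟩ := j'
  simp only at hr hj
  subst hr hj
  unfold iota
  rw [dif_pos h, fin_mk_mod hjv]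

lemma iota_val_eq {k n : ℕ} (i : Fin (k - 1)) (α) (r : Fin (k - 1)) (j : Fin (n - k + 1))
    (h : r.val = i.val) : iota k n i α r j = 0 := by
  unfold iota
  rw [dif_neg (by omega), dif_pos h]

lemma iota_val_gt {k n : ℕ} (i : Fin (k - 1)) (α) (r : Fin (k - 1)) (j : Fin (n - k + 1))
    (r' : Fin (k - 1 - 1)) (j' : Fin (n - 1 - (k - 1) + 1))
    (h : i.val < r.val) (hr : r'.val = r.val - 1) (hj : j'.val = j.val) :
    iota k n i α r j = α r' j' := by
  obtain ⟨rv, hrv⟩ := r'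
  obtain ⟨jv, hjv⟩ := j'
  simp only at hr hj
  subst hr hj
  unfold iota
  rw [dif_neg (by omega), dif_neg (by omega), fin_mk_mod hjv]

lemma iota_linear (k n : ℕ) (i : Fin (k - 1)) : IsLinearMap ℝ (iota k n i) := by
  constructor
  · intro α β
    funext r j
    simp only [iota, Pi.add_apply]
    split_ifs <;> simp
  · intro c α
    funext r j
    simp only [iota, Pi.smul_apply, smul_eq_mul]
    split_ifs <;> simp

lemma iota_zero (k n : ℕ) (i : Fin (k - 1)) : iota k n i 0 = 0 := by
  funext r j
  simp only [iota]
  split_ifs <;> rfl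

lemma iota_vhat {k n : ℕ} (hk : 3 ≤ k) (hkn : k + 2 ≤ n) (i : Fin (k - 1))
    (g : Fin (k - 1) → Fin (n - 1)) (hg : StrictMono g)
    (hJ' : (Finset.image g Finset.univ).card = k - 1)
    (hJ : (Finset.image (insF k n i g) Finset.univ).card = k) :
    iota k n i (vhat (k - 1) (n - 1) (Finset.image g Finset.univ) hJ')
      = vhat k n (Finset.image (insF k n i g) Finset.univ) hJ := by
  funext r j
  have hia := i.isLt
  have hrl := r.isLt
  have hjl := j.isLt
  obtain ⟨T1, hT1⟩ : ∃ t : Fin k, t.val = r.val := ⟨⟨r.val, by omega⟩, rfl⟩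
  obtain ⟨T2, hT2⟩ : ∃ t : Fin k, t.val = r.val + 1 := ⟨⟨r.val + 1, by omega⟩, rfl⟩
  rw [vhat_apply k n _ hJ r j T1 T2 hT1 hT2,
    imageEmb _ (insF_mono i hg) hJ T1, imageEmb _ (insF_mono i hg) hJ T2]
  rcases lt_trichotomy r.val i.val with h | h | h
  · obtain ⟨r', hr'⟩ : ∃ s : Fin (k - 1 - 1), s.val = r.val := ⟨⟨r.val, by omega⟩, rfl⟩
    obtain ⟨j', hj'⟩ : ∃ q : Fin (n - 1 - (k - 1) + 1), q.val = j.val := ⟨⟨j.val, by omega⟩, rfl⟩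
    obtain ⟨s1, hs1⟩ : ∃ s : Fin (k - 1), s.val = r.val := ⟨⟨r.val, by omega⟩, rfl⟩
    obtain ⟨s2, hs2⟩ : ∃ s : Fin (k - 1), s.val = r.val + 1 := ⟨⟨r.val + 1, by omega⟩, rfl⟩
    rw [iota_val_lt i _ r j r' j' h hr' hj',
      vhat_apply (k - 1) (n - 1) _ hJ' r' j' s1 s2 (by omega) (by omega),
      imageEmb g hg hJ' s1, imageEmb g hg hJ' s2,
      insF_val_le i g T1 s1 (by omega) (by omega),
      insF_val_le i g T2 s2 (by omega) (by omega)]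
    congr 1 <;> exact if_congr (by omega) rfl rfl
  · rw [iota_val_eq i _ r j h,
      insF_val_le i g T1 i (by omega) (by omega),
      insF_val_gt i g T2 i (by omega) (by omega)]
    by_cases hc : j.val + r.val = (g i).val
    · rw [if_pos hc, if_pos (by omega)]
      norm_num
    · rw [if_neg hc, if_neg (by omega)]
      norm_num
  · obtain ⟨r', hr'⟩ : ∃ s : Fin (k - 1 - 1), s.val = r.val - 1 := ⟨⟨r.val - 1, by omega⟩, rfl⟩
    obtain ⟨j', hj'⟩ : ∃ q : Fin (n - 1 - (k - 1) + 1), q.val = j.val := ⟨⟨j.val, by omega⟩, rfl⟩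
    obtain ⟨s1, hs1⟩ : ∃ s : Fin (k - 1), s.val = r.val - 1 := ⟨⟨r.val - 1, by omega⟩, rfl⟩
    obtain ⟨s2, hs2⟩ : ∃ s : Fin (k - 1), s.val = r.val := ⟨⟨r.val, by omega⟩, rfl⟩
    rw [iota_val_gt i _ r j r' j' h hr' hj',
      vhat_apply (k - 1) (n - 1) _ hJ' r' j' s1 s2 (by omega) (by omega),
      imageEmb g hg hJ' s1, imageEmb g hg hJ' s2,
      insF_val_gt i g T1 s1 (by omega) (by omega),
      insF_val_gt i g T2 s2 (by omega) (by omega)]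
    congr 1 <;> exact if_congr (by omega) rfl rfl

lemma iota_egen {k n : ℕ} (hk : 3 ≤ k) (hkn : k + 2 ≤ n) (i : Fin (k - 1))
    (r' : Fin (k - 1 - 1)) (R : Fin (k - 1))
    (hR : R.val = if r'.val < i.val then r'.val else r'.val + 1) :
    iota k n i (E r' ⟨0, Nat.succ_pos _⟩ - E r' ⟨n - 1 - (k - 1), Nat.lt_succ_self _⟩)
      = E R ⟨0, Nat.succ_pos _⟩ - E R ⟨n - k, Nat.lt_succ_self _⟩ := by
  have hia := i.isLt
  have hr'l := r'.isLt
  have hR' : (r'.val < i.val ∧ R.val = r'.val) ∨ (i.val ≤ r'.val ∧ R.val = r'.val + 1) := by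
    rcases lt_or_ge r'.val i.val with hcase | hcase
    · exact Or.inl ⟨hcase, by rw [hR, if_pos hcase]⟩
    · exact Or.inr ⟨hcase, by rw [hR, if_neg (by omega)]⟩
  clear hR
  {
    funext r j
    have hrl := r.isLt
    have hjl := j.isLt
    rcases lt_trichotomy r.val i.val with h | h | h
    · rw [iota_val_lt i _ r j ⟨r.val, by omega⟩ ⟨j.val, by omega⟩ h rfl rfl]
      simp only [E, Pi.sub_apply, Fin.ext_iff]
      congr 1 <;> exact if_congr (by constructor <;> (rintro ⟨h1, h2⟩; exact ⟨by omega, by omega⟩)) rfl rfl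
    · rw [iota_val_eq i _ r j h]
      simp only [E, Pi.sub_apply, Fin.ext_iff]
      rw [if_neg (by rintro ⟨h1, h2⟩; omega), if_neg (by rintro ⟨h1, h2⟩; omega)]
      norm_num
    · rw [iota_val_gt i _ r j ⟨r.val - 1, by omega⟩ ⟨j.val, by omega⟩ h rfl rfl]
      simp only [E, Pi.sub_apply, Fin.ext_iff]
      congr 1 <;> exact if_congr (by constructor <;> (rintro ⟨h1, h2⟩; exact ⟨by omega, by omega⟩)) rfl rfl
  }

noncomputable def phi (k n : ℕ) (i : Fin (k - 1)) (α : Fin (k - 1) → Fin (n - k + 1) → ℝ) : ℝ :=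
  ∑ j : Fin (n - k + 1), ((n - k - j.val : ℕ) : ℝ) * α i j

lemma phi_linear (k n : ℕ) (i : Fin (k - 1)) : IsLinearMap ℝ (phi k n i) := by
  constructor
  · intro α β
    unfold phi
    rw [← Finset.sum_add_distrib]
    exact Finset.sum_congr rfl fun j _ => by simp only [Pi.add_apply]; ring
  · intro c α
    unfold phi
    simp only [smul_eq_mul, Finset.mul_sum]
    exact Finset.sum_congr rfl fun j _ => by simp only [Pi.smul_apply, smul_eq_mul]; ring

lemma sum_w_ite (k n z A : ℕ) (h1 : z ≤ A) (h2 : A ≤ n - k + z) :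
    ∑ j : Fin (n - k + 1), ((n - k - j.val : ℕ) : ℝ) * (if j.val + z = A then 1 else 0)
      = ((n - k + z - A : ℕ) : ℝ) := by
  rw [Finset.sum_eq_single (⟨A - z, by omega⟩ : Fin (n - k + 1))]
  · rw [if_pos (by show A - z + z = A; omega), mul_one]
    congr 1
    show n - k - (A - z) = n - k + z - A
    omega
  · intro b _ hb
    by_cases hc : b.val + z = A
    · exact absurd (Fin.ext (show b.val = A - z by omega)) hb
    · rw [if_neg hc, mul_zero]
  · intro h; exact absurd (Finset.mem_univ _) h

lemma sum_w_ite' (k n z A : ℕ) (h1 : z + 1 ≤ A) (h2 : A ≤ n - k + z + 1) :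
    ∑ j : Fin (n - k + 1), ((n - k - j.val : ℕ) : ℝ) * (if j.val + z + 1 = A then 1 else 0)
      = ((n - k + z + 1 - A : ℕ) : ℝ) := by
  rw [Finset.sum_eq_single (⟨A - z - 1, by omega⟩ : Fin (n - k + 1))]
  · rw [if_pos (by show A - z - 1 + z + 1 = A; omega), mul_one]
    congr 1
    show n - k - (A - z - 1) = n - k + z + 1 - A
    omega
  · intro b _ hb
    by_cases hc : b.val + z + 1 = A
    · exact absurd (Fin.ext (show b.val = A - z - 1 by omega)) hb
    · rw [if_neg hc, mul_zero]
  · intro h; exact absurd (Finset.mem_univ _) h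

lemma sum_w_fin (k n : ℕ) (A : Fin (n - k + 1)) :
    ∑ j : Fin (n - k + 1), ((n - k - j.val : ℕ) : ℝ) * (if j = A then 1 else 0)
      = ((n - k - A.val : ℕ) : ℝ) := by
  rw [Finset.sum_eq_single A]
  · rw [if_pos rfl, mul_one]
  · intro b _ hb; rw [if_neg hb, mul_zero]
  · intro h; exact absurd (Finset.mem_univ _) h

lemma phi_vhat (k n : ℕ) (hk : 3 ≤ k) (hkn : k + 2 ≤ n) (i : Fin (k - 1))
    (J : Finset (Fin n)) (hJ : J.card = k) (t1 t2 : Fin k)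
    (ht1 : t1.val = i.val) (ht2 : t2.val = i.val + 1) :
    phi k n i (vhat k n J hJ)
      = ((n - k + i.val - (J.orderEmbOfFin hJ t1).val : ℕ) : ℝ)
        - ((n - k + i.val + 1 - (J.orderEmbOfFin hJ t2).val : ℕ) : ℝ) := by
  have hmono : StrictMono (J.orderEmbOfFin hJ) := (J.orderEmbOfFin hJ).strictMono
  have hb1 := emb_bounds hmono t1
  have hb2 := emb_bounds hmono t2
  have hia := i.isLt
  unfold phi
  rw [Finset.sum_congr rfl (fun j _ => by
    rw [vhat_apply k n J hJ i j t1 t2 ht1 ht2])]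
  simp only [mul_sub]
  rw [Finset.sum_sub_distrib,
    sum_w_ite k n i.val (J.orderEmbOfFin hJ t1).val (by omega) (by omega),
    sum_w_ite' k n i.val (J.orderEmbOfFin hJ t2).val (by omega) (by omega)]

lemma phi_egen (k n : ℕ) (hk : 3 ≤ k) (hkn : k + 2 ≤ n) (i R : Fin (k - 1)) :
    phi k n i (E R ⟨0, Nat.succ_pos _⟩ - E R ⟨n - k, Nat.lt_succ_self _⟩)
      = if i = R then ((n - k : ℕ) : ℝ) else 0 := by
  by_cases hiR : i = R
  · subst hiR
    rw [if_pos rfl]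
    unfold phi
    simp only [E, Pi.sub_apply, eq_self_iff_true, true_and, mul_sub]
    rw [Finset.sum_sub_distrib, sum_w_fin k n ⟨0, Nat.succ_pos _⟩,
      sum_w_fin k n ⟨n - k, Nat.lt_succ_self _⟩]
    show ((n - k - 0 : ℕ) : ℝ) - ((n - k - (n - k) : ℕ) : ℝ) = ((n - k : ℕ) : ℝ)
    rw [Nat.sub_zero, Nat.sub_self]
    norm_num
  · rw [if_neg hiR]
    unfold phi
    rw [Finset.sum_eq_zero]
    intro j _
    simp only [E, Pi.sub_apply]
    rw [if_neg (fun hc => hiR hc.1), if_neg (fun hc => hiR hc.1)]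
    norm_num

lemma hull_inter {EE : Type*} [AddCommGroup EE] [Module ℝ EE] (s : Set EE) (φ : EE → ℝ)
    (hlin : IsLinearMap ℝ φ) (hs : ∀ x ∈ s, 0 ≤ φ x) {x : EE}
    (hx : x ∈ convexHull ℝ s) (hx0 : φ x = 0) :
    x ∈ convexHull ℝ (s ∩ {y | φ y = 0}) := by
  rw [convexHull_eq] at hx
  obtain ⟨ι, t, w, z, hw0, hw1, hzs, hcm⟩ := hx
  have hφ : φ x = ∑ a ∈ t, w a * φ (z a) := by
    rw [← hcm, Finset.centerMass_eq_of_sum_1 _ _ hw1]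
    rw [show φ = ⇑(IsLinearMap.mk' φ hlin) from rfl, map_sum]
    exact Finset.sum_congr rfl fun a _ => by
      rw [map_smul, smul_eq_mul, IsLinearMap.mk'_apply]
  have hz0 : ∀ a ∈ t, w a ≠ 0 → φ (z a) = 0 := by
    have h0 := (Finset.sum_eq_zero_iff_of_nonneg
      (fun a ha => mul_nonneg (hw0 a ha) (hs _ (hzs a ha)))).mp (by rw [← hφ, hx0])
    intro a ha hwa
    rcases mul_eq_zero.mp (h0 a ha) with h | h
    · exact absurd h hwa
    · exact h
  rw [← hcm, ← Finset.centerMass_filter_ne_zero]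
  refine Finset.centerMass_mem_convexHull _ (fun a ha => hw0 a (Finset.mem_filter.mp ha).1)
    ?_ ?_
  · rw [Finset.sum_filter_ne_zero, hw1]
    norm_num
  · intro a ha
    obtain ⟨hat, hwa⟩ := Finset.mem_filter.mp ha
    exact ⟨hzs a hat, hz0 a hat hwa⟩

lemma vhat_congr {κ ν : ℕ} {J1 J2 : Finset (Fin ν)} (h : J1 = J2)
    (h1 : J1.card = κ) (h2 : J2.card = κ) : vhat κ ν J1 h1 = vhat κ ν J2 h2 := by
  subst h; rfl

lemma image_emb_eq {ν κ : ℕ} (J : Finset (Fin ν)) (hJ : J.card = κ) :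
    Finset.image (fun t => J.orderEmbOfFin hJ t) Finset.univ = J := by
  ext x
  rw [Finset.mem_image, mem_iff_emb J hJ]
  constructor
  · rintro ⟨t, -, rfl⟩; exact ⟨t, rfl⟩
  · rintro ⟨t, rfl⟩; exact ⟨t, Finset.mem_univ t, rfl⟩

/-- the intersection of R̂_{k,n} with the coordinate subspace where the
i-th row vanishes is the image of R̂_{k−1,n−1} under ι_i. -/
theorem stmt_13 (k n : ℕ) (hk : 3 ≤ k) (hkn : k + 2 ≤ n) (i : Fin (k - 1)) :
    Rhat k n ∩ {α | ∀ j : Fin (n - k + 1), α i j = 0}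
      = iota k n i '' Rhat (k - 1) (n - 1) := by
  have hia := i.isLt
  set S : Set (Fin (k - 1) → Fin (n - k + 1) → ℝ) := {0}
    ∪ {x | ∃ (J : Finset (Fin n)) (hJ : J.card = k), ¬ frozen n k J ∧ x = vhat k n J hJ}
    ∪ {x | ∃ i' : Fin (k - 1),
        x = E i' ⟨0, Nat.succ_pos _⟩ - E i' ⟨n - k, Nat.lt_succ_self _⟩} with hSdef
  set S' : Set (Fin (k - 1 - 1) → Fin (n - 1 - (k - 1) + 1) → ℝ) := {0}
    ∪ {x | ∃ (J : Finset (Fin (n - 1))) (hJ : J.card = k - 1),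
        ¬ frozen (n - 1) (k - 1) J ∧ x = vhat (k - 1) (n - 1) J hJ}
    ∪ {x | ∃ i' : Fin (k - 1 - 1),
        x = E i' ⟨0, Nat.succ_pos _⟩ - E i' ⟨n - 1 - (k - 1), Nat.lt_succ_self _⟩} with hS'def
  have hRb : Rhat k n = convexHull ℝ S := rfl
  have hRs : Rhat (k - 1) (n - 1) = convexHull ℝ S' := rfl
  have F1 : ∀ x ∈ S, 0 ≤ phi k n i x := by
    rintro x ((hx | hx) | hx)
    · rw [Set.mem_singleton_iff] at hx
      subst hx
      unfold phi
      exact le_of_eq (Finset.sum_eq_zero fun j _ => by simp).symm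
    · obtain ⟨J, hJ, hnf, rfl⟩ := hx
      obtain ⟨t1, ht1⟩ : ∃ t : Fin k, t.val = i.val := ⟨⟨i.val, by omega⟩, rfl⟩
      obtain ⟨t2, ht2⟩ : ∃ t : Fin k, t.val = i.val + 1 := ⟨⟨i.val + 1, by omega⟩, rfl⟩
      rw [phi_vhat k n hk hkn i J hJ t1 t2 ht1 ht2]
      have hmono : StrictMono (⇑(J.orderEmbOfFin hJ)) := (J.orderEmbOfFin hJ).strictMono
      have hstep := mono_step hmono 1 t1 t2 (by omega)
      have hb1 := emb_bounds hmono t1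
      have hle : ((n - k + i.val + 1 - (J.orderEmbOfFin hJ t2).val : ℕ) : ℝ)
          ≤ ((n - k + i.val - (J.orderEmbOfFin hJ t1).val : ℕ) : ℝ) :=
        Nat.cast_le.mpr (by omega)
      exact sub_nonneg.mpr hle
    · obtain ⟨R, rfl⟩ := hx
      rw [phi_egen k n hk hkn i R]
      split_ifs
      · exact Nat.cast_nonneg _
      · exact le_refl 0
  have F4 : ∀ x : Fin (k - 1) → Fin (n - k + 1) → ℝ,
      (∀ j, x i j = 0) → phi k n i x = 0 := by
    intro x hx
    unfold phi
    exact Finset.sum_eq_zero fun j _ => by rw [hx j, mul_zero]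
  have F2 : ∀ x ∈ S, phi k n i x = 0 → x ∈ iota k n i '' S' := by
    rintro x ((hx | hx) | hx) h0
    · rw [Set.mem_singleton_iff] at hx
      subst hx
      exact ⟨0, Or.inl (Or.inl rfl), iota_zero k n i⟩
    · obtain ⟨J, hJ, hnf, rfl⟩ := hx
      obtain ⟨t1, ht1⟩ : ∃ t : Fin k, t.val = i.val := ⟨⟨i.val, by omega⟩, rfl⟩
      obtain ⟨t2, ht2⟩ : ∃ t : Fin k, t.val = i.val + 1 := ⟨⟨i.val + 1, by omega⟩, rfl⟩
      rw [phi_vhat k n hk hkn i J hJ t1 t2 ht1 ht2] at h0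
      have hmono : StrictMono (⇑(J.orderEmbOfFin hJ)) := (J.orderEmbOfFin hJ).strictMono
      have hstep := mono_step hmono 1 t1 t2 (by omega)
      have hb1 := emb_bounds hmono t1
      have hb2 := emb_bounds hmono t2
      have hcast : (n - k + i.val - (J.orderEmbOfFin hJ t1).val : ℕ)
          = (n - k + i.val + 1 - (J.orderEmbOfFin hJ t2).val : ℕ) := by
        exact_mod_cast sub_eq_zero.mp h0
      have hcons : (J.orderEmbOfFin hJ t2).val = (J.orderEmbOfFin hJ t1).val + 1 := by omega
      have hgm : StrictMono (delF k n hk hkn i (⇑(J.orderEmbOfFin hJ))) :=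
        delF_mono hk hkn i hmono
      have hins : insF k n i (delF k n hk hkn i (⇑(J.orderEmbOfFin hJ)))
          = ⇑(J.orderEmbOfFin hJ) := insF_delF hk hkn i hmono ht1 ht2 hcons
      have hJ'c : (Finset.image (delF k n hk hkn i (⇑(J.orderEmbOfFin hJ)))
          Finset.univ).card = k - 1 := imageCard _ hgm
      have hJimg : Finset.image (insF k n i (delF k n hk hkn i (⇑(J.orderEmbOfFin hJ))))
          Finset.univ = J := by
        rw [hins]; exact image_emb_eq J hJ
      have hJc2 : (Finset.image (insF k n i (delF k n hk hkn i (⇑(J.orderEmbOfFin hJ))))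
          Finset.univ).card = k := by rw [hJimg]; exact hJ
      refine ⟨vhat (k - 1) (n - 1)
          (Finset.image (delF k n hk hkn i (⇑(J.orderEmbOfFin hJ))) Finset.univ) hJ'c,
        Or.inl (Or.inr ⟨_, hJ'c, ?_, rfl⟩), ?_⟩
      · intro hfr
        have hchar := frozen_char hJ'c (by omega) hfr
        have hge : (fun t => (Finset.image (delF k n hk hkn i (⇑(J.orderEmbOfFin hJ)))
            Finset.univ).orderEmbOfFin hJ'c t)
            = delF k n hk hkn i (⇑(J.orderEmbOfFin hJ)) := funext (imageEmb _ hgm hJ'c)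
        rw [hge] at hchar
        have hbig := (char_transfer hk hkn i _).mpr hchar
        rw [hins] at hbig
        exact hnf (char_frozen hJ (by omega) hbig)
      · rw [iota_vhat hk hkn i _ hgm hJ'c hJc2]
        exact vhat_congr hJimg hJc2 hJ
    · obtain ⟨R, rfl⟩ := hx
      rw [phi_egen k n hk hkn i R] at h0
      have hiR : ¬ i = R := by
        intro he
        rw [if_pos he] at h0
        have hnk : (n - k : ℕ) = 0 := by exact_mod_cast h0
        omega
      have hRl := R.isLt
      have hne : i.val ≠ R.val := fun h => hiR (Fin.ext h)
      by_cases hRi : R.val < i.val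
      · refine ⟨_, Or.inr ⟨⟨R.val, by omega⟩, rfl⟩,
          iota_egen hk hkn i ⟨R.val, by omega⟩ R ?_⟩
        show R.val = if R.val < i.val then R.val else R.val + 1
        rw [if_pos hRi]
      · have hRgt : i.val < R.val := by omega
        refine ⟨_, Or.inr ⟨⟨R.val - 1, by omega⟩, rfl⟩,
          iota_egen hk hkn i ⟨R.val - 1, by omega⟩ R ?_⟩
        show R.val = if R.val - 1 < i.val then R.val - 1 else R.val - 1 + 1
        rw [if_neg (by omega)]
        omega
  have F3 : iota k n i '' S' ⊆ S ∩ {α | ∀ j : Fin (n - k + 1), α i j = 0} := by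
    rintro _ ⟨y, hy, rfl⟩
    constructor
    · rcases hy with (hy | hy) | hy
      · rw [Set.mem_singleton_iff] at hy
        subst hy
        rw [iota_zero k n i]
        exact Or.inl (Or.inl rfl)
      · obtain ⟨J', hJ', hnf, rfl⟩ := hy
        have hmono : StrictMono (⇑(J'.orderEmbOfFin hJ')) := (J'.orderEmbOfFin hJ').strictMono
        have hJ'img : Finset.image (⇑(J'.orderEmbOfFin hJ')) Finset.univ = J' :=
          image_emb_eq J' hJ'
        have hJ'c : (Finset.image (⇑(J'.orderEmbOfFin hJ')) Finset.univ).card = k - 1 :=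
          imageCard _ hmono
        have hfm : StrictMono (insF k n i (⇑(J'.orderEmbOfFin hJ'))) := insF_mono i hmono
        have hJc : (Finset.image (insF k n i (⇑(J'.orderEmbOfFin hJ')))
            Finset.univ).card = k := imageCard _ hfm
        have heq : iota k n i (vhat (k - 1) (n - 1) J' hJ')
            = vhat k n (Finset.image (insF k n i (⇑(J'.orderEmbOfFin hJ')))
                Finset.univ) hJc := by
          rw [vhat_congr hJ'img.symm hJ' hJ'c]
          exact iota_vhat hk hkn i _ hmono hJ'c hJc
        rw [heq]
        refine Or.inl (Or.inr ⟨_, hJc, ?_, rfl⟩)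
        intro hfr
        have hchar := frozen_char hJc (by omega) hfr
        have hge : (fun t => (Finset.image (insF k n i (⇑(J'.orderEmbOfFin hJ')))
            Finset.univ).orderEmbOfFin hJc t)
            = insF k n i (⇑(J'.orderEmbOfFin hJ')) := funext (imageEmb _ hfm hJc)
        rw [hge] at hchar
        have hsmall := (char_transfer hk hkn i _).mp hchar
        exact hnf (char_frozen hJ' (by omega) hsmall)
      · obtain ⟨r', rfl⟩ := hy
        have hr'l := r'.isLt
        by_cases hcase : r'.val < i.val
        · rw [iota_egen hk hkn i r' ⟨r'.val, by omega⟩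
            (by show r'.val = if r'.val < i.val then r'.val else r'.val + 1
                rw [if_pos hcase])]
          exact Or.inr ⟨⟨r'.val, by omega⟩, rfl⟩
        · rw [iota_egen hk hkn i r' ⟨r'.val + 1, by omega⟩
            (by show r'.val + 1 = if r'.val < i.val then r'.val else r'.val + 1
                rw [if_neg hcase])]
          exact Or.inr ⟨⟨r'.val + 1, by omega⟩, rfl⟩
    · intro j
      exact iota_val_eq i y i j rfl
  rw [hRb, hRs]
  apply Set.Subset.antisymm
  · rintro x ⟨hx, hxH⟩
    have h0 : phi k n i x = 0 := F4 x hxH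
    have hx2 := hull_inter S (phi k n i) (phi_linear k n i) F1 hx h0
    have hsub : S ∩ {y | phi k n i y = 0} ⊆ iota k n i '' S' := by
      rintro y ⟨hy1, hy2⟩
      exact F2 y hy1 hy2
    have hx3 := convexHull_mono hsub hx2
    rw [← (iota_linear k n i).image_convexHull] at hx3
    exact hx3
  · rintro _ ⟨y, hy, rfl⟩
    have h1 : iota k n i y ∈ iota k n i '' convexHull ℝ S' := Set.mem_image_of_mem _ hy
    rw [(iota_linear k n i).image_convexHull] at h1
    constructor
    · exact convexHull_mono (fun z hz => (F3 hz).1) h1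
    · have hHconv : Convex ℝ {α : Fin (k - 1) → Fin (n - k + 1) → ℝ |
          ∀ j : Fin (n - k + 1), α i j = 0} := by
        intro x hx y' hy' a b _ _ _ j
        simp only [Set.mem_setOf_eq] at hx hy'
        simp only [Pi.add_apply, Pi.smul_apply, smul_eq_mul]
        rw [hx j, hy' j]
        ring
      exact convexHull_min (fun z hz => (F3 hz).2) hHconv h1

end Stmt13
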